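/- arXiv:1908.10393 — 4 statements merged into one kernel-verified Lean document; each statement's English description precedes it below -/
import Mathlib

section
/- Let ς:H⊗H→A be a k-linear map such that ρ and ς satisfy conditions (2), (4), (11) and (17)–(22). Then for all h,k ∈ H: (h⁽¹⁾·1_A)ς(h⁽²⁾⊗k) = ς(h⊗k) and ς(h⁽¹⁾⊗k)(h⁽²⁾·1_A) = ς(h⊗k). -/
open scoped TensorProduct

/-- The data of a weak bialgebra structure (together with an antipode and its
inverse) on a `k`-algebra `H`: a comultiplication `Δ`, a counit `ε`, an
antipode `S` and its inverse `Sinv`. -/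
structure WeakHopfData (k H : Type*) [Field k] [Ring H] [Algebra k H] where
  Δ : H →ₗ[k] H ⊗[k] H
  ε : H →ₗ[k] k
  S : H →ₗ[k] H
  Sinv : H →ₗ[k] H

section

variable {k H A : Type*} [Field k] [Ring H] [Algebra k H] [Ring A] [Algebra k A]

/-- `Π^L(h) = ε(1⁽¹⁾h)1⁽²⁾`. -/
noncomputable def piL (W : WeakHopfData k H) (h : H) : H :=
  (TensorProduct.lid k H) ((LinearMap.rTensor H (W.ε ∘ₗ LinearMap.mulRight k h)) (W.Δ 1))

/-- `Π^R(h) = 1⁽¹⁾ε(h1⁽²⁾)`. -/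
noncomputable def piR (W : WeakHopfData k H) (h : H) : H :=
  (TensorProduct.rid k H) ((LinearMap.lTensor H (W.ε ∘ₗ LinearMap.mulLeft k h)) (W.Δ 1))

/-- `H^L = im(Π^L)`. -/
def HL (W : WeakHopfData k H) : Set H := Set.range (piL W)

/-- `H^R = im(Π^R)`. -/
def HR (W : WeakHopfData k H) : Set H := Set.range (piR W)

/-- The axioms of a weak Hopf algebra with bijective antipode, where Sweedler
sums are expressed via arbitrary finite representations of the comultiplication. -/
structure IsWeakHopf (W : WeakHopfData k H) : Prop where
  coassoc : ∀ h : H,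
    (TensorProduct.assoc k H H H) ((LinearMap.rTensor H W.Δ) (W.Δ h)) =
      (LinearMap.lTensor H W.Δ) (W.Δ h)
  counit_left : ∀ h : H, (TensorProduct.lid k H) ((LinearMap.rTensor H W.ε) (W.Δ h)) = h
  counit_right : ∀ h : H, (TensorProduct.rid k H) ((LinearMap.lTensor H W.ε) (W.Δ h)) = h
  comul_mul : ∀ h l : H, W.Δ (h * l) = W.Δ h * W.Δ l
  weak_comul_one₁ : (LinearMap.lTensor H W.Δ) (W.Δ 1) =
    (TensorProduct.assoc k H H H) (W.Δ 1 ⊗ₜ[k] (1 : H)) * ((1 : H) ⊗ₜ[k] W.Δ 1)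
  weak_comul_one₂ : (LinearMap.lTensor H W.Δ) (W.Δ 1) =
    ((1 : H) ⊗ₜ[k] W.Δ 1) * (TensorProduct.assoc k H H H) (W.Δ 1 ⊗ₜ[k] (1 : H))
  weak_counit : ∀ h l m : H, ∀ (n : ℕ) (x y : Fin n → H),
    W.Δ l = ∑ i, x i ⊗ₜ[k] y i →
      W.ε (h * l * m) = ∑ i, W.ε (h * x i) * W.ε (y i * m) ∧
      W.ε (h * l * m) = ∑ i, W.ε (h * y i) * W.ε (x i * m)
  antipode_left : ∀ h : H, ∀ (n : ℕ) (x y : Fin n → H),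
    W.Δ h = ∑ i, x i ⊗ₜ[k] y i → ∑ i, x i * W.S (y i) = piL W h
  antipode_right : ∀ h : H, ∀ (n : ℕ) (x y : Fin n → H),
    W.Δ h = ∑ i, x i ⊗ₜ[k] y i → ∑ i, W.S (x i) * y i = piR W h
  antipode_mid : ∀ h : H, ∀ (n : ℕ) (x y : Fin n → H),
    W.Δ h = ∑ i, x i ⊗ₜ[k] y i →
      ∀ (m : Fin n → ℕ) (u v : (i : Fin n) → Fin (m i) → H),
        (∀ i, W.Δ (y i) = ∑ j, u i j ⊗ₜ[k] v i j) →
          ∑ i, ∑ j, W.S (x i) * u i j * W.S (v i j) = W.S h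
  S_Sinv : ∀ h : H, W.S (W.Sinv h) = h
  Sinv_S : ∀ h : H, W.Sinv (W.S h) = h

/-- Condition (1): `h·1_A = Π^L(h)·1_A`. -/
def cond1 (W : WeakHopfData k H) (ρ : H →ₗ[k] A →ₗ[k] A) : Prop :=
  ∀ h : H, ρ h 1 = ρ (piL W h) 1

/-- Condition (2): `h·(aa') = (h⁽¹⁾·a)(h⁽²⁾·a')`. -/
def cond2 (W : WeakHopfData k H) (ρ : H →ₗ[k] A →ₗ[k] A) : Prop :=
  ∀ (h : H) (a a' : A) (n : ℕ) (x y : Fin n → H),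
    W.Δ h = ∑ i, x i ⊗ₜ[k] y i → ρ h (a * a') = ∑ i, ρ (x i) a * ρ (y i) a'

/-- Condition (3): `S⁻¹(l)h·a = (h·a)(l·1_A)` and `lh·a = (l·1_A)(h·a)` for `l ∈ H^L`. -/
def cond3 (W : WeakHopfData k H) (ρ : H →ₗ[k] A →ₗ[k] A) : Prop :=
  ∀ (h : H) (a : A), ∀ l ∈ HL W,
    ρ (W.Sinv l * h) a = ρ h a * ρ l 1 ∧ ρ (l * h) a = ρ l 1 * ρ h a

/-- Condition (4): `1·a = a`. -/
def cond4 (ρ : H →ₗ[k] A →ₗ[k] A) : Prop := ∀ a : A, ρ 1 a = a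

/-- Condition (5). -/
def cond5 (W : WeakHopfData k H) (ρ : H →ₗ[k] A →ₗ[k] A) (σ : H → H → A) : Prop :=
  ∀ (h g : H), ∀ l ∈ HL W,
    σ (l * h) g = ρ l 1 * σ h g ∧ σ (W.Sinv l * h) g = σ h g * ρ l 1

/-- Condition (6): `(h⁽¹⁾·(l·1_A))σ(h⁽²⁾,k) = σ(h,lk)` for `l ∈ H^L`. -/
def cond6 (W : WeakHopfData k H) (ρ : H →ₗ[k] A →ₗ[k] A) (σ : H → H → A) : Prop :=
  ∀ (h g : H), ∀ l ∈ HL W, ∀ (n : ℕ) (x y : Fin n → H),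
    W.Δ h = ∑ i, x i ⊗ₜ[k] y i →
      ∑ i, ρ (x i) (ρ l 1) * σ (y i) g = σ h (l * g)

/-- Condition (7): `σ(1,h) = σ(h,1) = h·1_A`. -/
def cond7 (ρ : H →ₗ[k] A →ₗ[k] A) (σ : H → H → A) : Prop :=
  ∀ h : H, σ 1 h = ρ h 1 ∧ σ h 1 = ρ h 1

/-- Condition (8), the cocycle condition. -/
def cond8 (W : WeakHopfData k H) (ρ : H →ₗ[k] A →ₗ[k] A) (σ : H → H → A) : Prop :=
  ∀ (h g m : H) (n₁ : ℕ) (x₁ y₁ : Fin n₁ → H) (n₂ : ℕ) (x₂ y₂ : Fin n₂ → H)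
    (n₃ : ℕ) (x₃ y₃ : Fin n₃ → H),
    W.Δ h = ∑ i, x₁ i ⊗ₜ[k] y₁ i → W.Δ g = ∑ i, x₂ i ⊗ₜ[k] y₂ i →
    W.Δ m = ∑ i, x₃ i ⊗ₜ[k] y₃ i →
      ∑ i, ∑ j, ∑ p, ρ (x₁ i) (σ (x₂ j) (x₃ p)) * σ (y₁ i) (y₂ j * y₃ p) =
        ∑ i, ∑ j, σ (x₁ i) (x₂ j) * σ (y₁ i * y₂ j) m

/-- Condition (9), the twisted module condition. -/
def cond9 (W : WeakHopfData k H) (ρ : H →ₗ[k] A →ₗ[k] A) (σ : H → H → A) : Prop :=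
  ∀ (h g : H) (a : A) (n : ℕ) (x y : Fin n → H) (m : ℕ) (u v : Fin m → H),
    W.Δ h = ∑ i, x i ⊗ₜ[k] y i → W.Δ g = ∑ j, u j ⊗ₜ[k] v j →
      ∑ i, ∑ j, ρ (x i) (ρ (u j) a) * σ (y i) (v j) =
        ∑ i, ∑ j, σ (x i) (u j) * ρ (y i * v j) a

/-- Condition (10): `h·(l·1_A) = hl·1_A` for `l ∈ H^L`. -/
def cond10 (W : WeakHopfData k H) (ρ : H →ₗ[k] A →ₗ[k] A) : Prop :=
  ∀ h : H, ∀ l ∈ HL W, ρ h (ρ l 1) = ρ (h * l) 1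

/-- Condition (11): `h·(l·1_A) = hl·1_A` for all `h, l ∈ H`. -/
def cond11 (ρ : H →ₗ[k] A →ₗ[k] A) : Prop :=
  ∀ h l : H, ρ h (ρ l 1) = ρ (h * l) 1

/-- Condition (12): `σ(h,l) = σ(hl,1)` for `l ∈ H^L`. -/
def cond12 (W : WeakHopfData k H) (σ : H → H → A) : Prop :=
  ∀ h : H, ∀ l ∈ HL W, σ h l = σ (h * l) 1

/-- Condition (13). -/
def cond13 (W : WeakHopfData k H) (ρ : H →ₗ[k] A →ₗ[k] A) (σbar : H → H → A) : Prop :=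
  ∀ (h g : H) (n : ℕ) (x y : Fin n → H) (m : ℕ) (u v : Fin m → H),
    W.Δ h = ∑ i, x i ⊗ₜ[k] y i → W.Δ g = ∑ j, u j ⊗ₜ[k] v j →
      σbar h g = ∑ i, ∑ j, ρ (x i * u j) 1 * σbar (y i) (v j)

/-- Condition (14). -/
def cond14 (W : WeakHopfData k H) (ρ : H →ₗ[k] A →ₗ[k] A) (σbar : H → H → A) : Prop :=
  ∀ (h g : H), ∀ l ∈ HL W,
    σbar (l * h) g = ρ l 1 * σbar h g ∧ σbar (W.Sinv l * h) g = σbar h g * ρ l 1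

/-- Condition (15). -/
def cond15 (W : WeakHopfData k H) (ρ : H →ₗ[k] A →ₗ[k] A) (σbar : H → H → A) : Prop :=
  ∀ (h g : H), ∀ l ∈ HL W, ∀ (n : ℕ) (x y : Fin n → H),
    W.Δ h = ∑ i, x i ⊗ₜ[k] y i →
      ∑ i, σbar (x i) g * ρ (y i) (ρ l 1) = σbar h (W.Sinv l * g)

/-- Condition (16). -/
def cond16 (W : WeakHopfData k H) (ρ : H →ₗ[k] A →ₗ[k] A) (σ σbar : H → H → A) : Prop :=
  ∀ (h g : H) (n : ℕ) (x y : Fin n → H) (m : ℕ) (u v : Fin m → H),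
    W.Δ h = ∑ i, x i ⊗ₜ[k] y i → W.Δ g = ∑ j, u j ⊗ₜ[k] v j →
      (∑ i, ∑ j, σ (x i) (u j) * σbar (y i) (v j) = ρ h (ρ g 1)) ∧
      (∑ i, ∑ j, σbar (x i) (u j) * σ (y i) (v j) = ρ (h * g) 1)

/-- Condition (17), the cocycle condition for `ς : H ⊗ H → A`. -/
def cond17 (W : WeakHopfData k H) (ρ : H →ₗ[k] A →ₗ[k] A) (ς : H ⊗[k] H → A) : Prop :=
  ∀ (h g m : H) (n₁ : ℕ) (x₁ y₁ : Fin n₁ → H) (n₂ : ℕ) (x₂ y₂ : Fin n₂ → H)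
    (n₃ : ℕ) (x₃ y₃ : Fin n₃ → H),
    W.Δ h = ∑ i, x₁ i ⊗ₜ[k] y₁ i → W.Δ g = ∑ i, x₂ i ⊗ₜ[k] y₂ i →
    W.Δ m = ∑ i, x₃ i ⊗ₜ[k] y₃ i →
      ∑ i, ∑ j, ∑ p, ρ (x₁ i) (ς (x₂ j ⊗ₜ[k] x₃ p)) * ς (y₁ i ⊗ₜ[k] (y₂ j * y₃ p)) =
        ∑ i, ∑ j, ς (x₁ i ⊗ₜ[k] x₂ j) * ς ((y₁ i * y₂ j) ⊗ₜ[k] m)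

/-- Condition (18), the twisted module condition for `ς : H ⊗ H → A`. -/
def cond18 (W : WeakHopfData k H) (ρ : H →ₗ[k] A →ₗ[k] A) (ς : H ⊗[k] H → A) : Prop :=
  ∀ (h g : H) (a : A) (n : ℕ) (x y : Fin n → H) (m : ℕ) (u v : Fin m → H),
    W.Δ h = ∑ i, x i ⊗ₜ[k] y i → W.Δ g = ∑ j, u j ⊗ₜ[k] v j →
      ∑ i, ∑ j, ρ (x i) (ρ (u j) a) * ς (y i ⊗ₜ[k] v j) =
        ∑ i, ∑ j, ς (x i ⊗ₜ[k] u j) * ρ (y i * v j) a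

/-- Condition (19). -/
def cond19 (W : WeakHopfData k H) (ρ : H →ₗ[k] A →ₗ[k] A) (ς : H ⊗[k] H → A) : Prop :=
  ∀ (h g : H) (n : ℕ) (x y : Fin n → H) (m : ℕ) (u v : Fin m → H),
    W.Δ h = ∑ i, x i ⊗ₜ[k] y i → W.Δ g = ∑ j, u j ⊗ₜ[k] v j →
      ς (h ⊗ₜ[k] g) = ∑ i, ∑ j, ς (x i ⊗ₜ[k] u j) * ρ (y i * v j) 1

/-- Condition (20). -/
def cond20 (W : WeakHopfData k H) (ρ : H →ₗ[k] A →ₗ[k] A) (ς : H ⊗[k] H → A) : Prop :=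
  ∀ (h : H) (n : ℕ) (x y : Fin n → H) (m : ℕ) (u v : Fin m → H),
    W.Δ h = ∑ i, x i ⊗ₜ[k] y i → W.Δ 1 = ∑ j, u j ⊗ₜ[k] v j →
      ρ h 1 = ∑ i, ∑ j, ρ (x i) (ρ (u j) 1) * ς (y i ⊗ₜ[k] v j)

/-- Condition (21). -/
def cond21 (W : WeakHopfData k H) (ρ : H →ₗ[k] A →ₗ[k] A) (ς : H ⊗[k] H → A) : Prop :=
  ∀ (h : H) (m : ℕ) (u v : Fin m → H),
    W.Δ 1 = ∑ j, u j ⊗ₜ[k] v j →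
      ρ h 1 = ∑ j, ρ (u j) 1 * ς (v j ⊗ₜ[k] h)

/-- Condition (22): `a(1⁽¹⁾·1_A) ⊗ 1⁽²⁾ = (1⁽¹⁾·a) ⊗ 1⁽²⁾` in `A ⊗ H`. -/
def cond22 (W : WeakHopfData k H) (ρ : H →ₗ[k] A →ₗ[k] A) : Prop :=
  ∀ (a : A) (m : ℕ) (u v : Fin m → H),
    W.Δ 1 = ∑ j, u j ⊗ₜ[k] v j →
      (∑ j, (a * ρ (u j) 1) ⊗ₜ[k] v j) = ∑ j, (ρ (u j) a) ⊗ₜ[k] v j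

/-- Condition (23). -/
def cond23 (W : WeakHopfData k H) (ρ : H →ₗ[k] A →ₗ[k] A) (ςbar : H ⊗[k] H → A) : Prop :=
  ∀ (h g : H) (n : ℕ) (x y : Fin n → H) (m : ℕ) (u v : Fin m → H),
    W.Δ h = ∑ i, x i ⊗ₜ[k] y i → W.Δ g = ∑ j, u j ⊗ₜ[k] v j →
      ςbar (h ⊗ₜ[k] g) = ∑ i, ∑ j, ρ (x i * u j) 1 * ςbar (y i ⊗ₜ[k] v j)

/-- Condition (24). -/
def cond24 (W : WeakHopfData k H) (ρ : H →ₗ[k] A →ₗ[k] A) (ς ςbar : H ⊗[k] H → A) : Prop :=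
  ∀ (h g : H) (n : ℕ) (x y : Fin n → H) (m : ℕ) (u v : Fin m → H),
    W.Δ h = ∑ i, x i ⊗ₜ[k] y i → W.Δ g = ∑ j, u j ⊗ₜ[k] v j →
      (∑ i, ∑ j, ς (x i ⊗ₜ[k] u j) * ςbar (y i ⊗ₜ[k] v j) = ρ (h * g) 1) ∧
      (∑ i, ∑ j, ςbar (x i ⊗ₜ[k] u j) * ς (y i ⊗ₜ[k] v j) = ρ (h * g) 1)

/-- `σ` is `H^R`-balanced: `σ(hr,k) = σ(h,rk)` for `r ∈ H^R`. -/
def HRBalanced (W : WeakHopfData k H) (σ : H → H → A) : Prop :=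
  ∀ (h g : H), ∀ r ∈ HR W, σ (h * r) g = σ h (r * g)

/-- `σbar` is `H^L`-balanced: `σbar(hl,k) = σbar(h,lk)` for `l ∈ H^L`. -/
def HLBalanced (W : WeakHopfData k H) (σbar : H → H → A) : Prop :=
  ∀ (h g : H), ∀ l ∈ HL W, σbar (h * l) g = σbar h (l * g)

/-- The idempotent `∇ρ : A ⊗ H → A ⊗ H`, `a ⊗ h ↦ a(h⁽¹⁾·1_A) ⊗ h⁽²⁾`. -/
noncomputable def nabla (W : WeakHopfData k H) (ρ : H →ₗ[k] A →ₗ[k] A) :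
    A ⊗[k] H →ₗ[k] A ⊗[k] H :=
  (LinearMap.rTensor H (LinearMap.mul' k A ∘ₗ LinearMap.lTensor A (ρ.flip 1))) ∘ₗ
    (TensorProduct.assoc k A H H).symm.toLinearMap ∘ₗ LinearMap.lTensor A W.Δ

/-- The subspace `N` of `A ⊗ H` spanned by the elements
`a(l·1_A) ⊗ h - a ⊗ lh` with `l ∈ H^L`, so that `(A ⊗ H)/N = A ⊗_{H^L} H`. -/
def relN (W : WeakHopfData k H) (ρ : H →ₗ[k] A →ₗ[k] A) : Submodule k (A ⊗[k] H) :=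
  Submodule.span k
    {z | ∃ (a : A) (l h : H), l ∈ HL W ∧ z = (a * ρ l 1) ⊗ₜ[k] h - a ⊗ₜ[k] (l * h)}

/-- The map `σ̃(h,k) := (h⁽¹⁾k⁽¹⁾·1_A)σ̄(h⁽²⁾,k⁽²⁾)`. -/
noncomputable def sigmaTilde (W : WeakHopfData k H) (ρ : H →ₗ[k] A →ₗ[k] A)
    (σbar : H →ₗ[k] H →ₗ[k] A) : H → H → A := fun h g =>
  LinearMap.mul' k A
    ((TensorProduct.map ((ρ.flip 1) ∘ₗ LinearMap.mul' k H) (TensorProduct.lift σbar))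
      ((TensorProduct.tensorTensorTensorComm k H H H H) (W.Δ h ⊗ₜ[k] W.Δ g)))

end

/-! Write `ε_d(h) = hd·1_A` (`actOne ρ d`) and `ς_g(h) = ς(h ⊗ g)` (`cocycleSlice ς g`), as elements
of the convolution algebra of linear maps `H → A`, which is associative because `Δ` is
coassociative. The claims say that `ε_1` is a left and a right unit for every `ς_g`.
Condition (2), read through (11), gives `ε_1 ⋆ ε_c = ε_c` and `ε_d ⋆ ε_1 = ε_d`. Condition (19)
expands `ς_g = ∑ ς_{g⁽¹⁾} ⋆ ε_{g⁽²⁾}`, and (18) at `a = 1` followed by (19) gives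
`ς_g = ∑ ε_{g⁽¹⁾} ⋆ ς_{g⁽²⁾}`; associativity then absorbs `ε_1` on either side. -/

section

open Coalgebra WithConv

theorem TensorProduct.exists_fin_sum_tmul {R M N : Type*} [CommSemiring R] [AddCommMonoid M]
    [AddCommMonoid N] [Module R M] [Module R N] (z : M ⊗[R] N) :
    ∃ (n : ℕ) (x : Fin n → M) (y : Fin n → N), z = ∑ i, x i ⊗ₜ[R] y i := by
  obtain ⟨S, rfl⟩ := TensorProduct.exists_finset z
  refine ⟨S.card, fun i => (S.equivFin.symm i).1.1, fun i => (S.equivFin.symm i).1.2, ?_⟩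
  rw [← Finset.sum_coe_sort S, ← S.equivFin.symm.sum_comp]

theorem LinearMap.convMul_apply_of_comul_eq {R C A : Type*} [CommSemiring R] [AddCommMonoid C]
    [Module R C] [CoalgebraStruct R C] [Semiring A] [Algebra R A]
    (f g : WithConv (C →ₗ[R] A)) {c : C} {n : ℕ} {x y : Fin n → C}
    (hc : comul c = ∑ i, x i ⊗ₜ[R] y i) : (f * g) c = ∑ i, f (x i) * g (y i) := by
  simp only [convMul_apply, hc, map_sum, TensorProduct.map_tmul, mul'_apply]

variable {k H A : Type*} [Field k] [Ring H] [Algebra k H] [Ring A] [Algebra k A]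

abbrev IsWeakHopf.toCoalgebra {W : WeakHopfData k H} (hW : IsWeakHopf W) : Coalgebra k H where
  comul := W.Δ
  counit := W.ε
  coassoc := LinearMap.ext hW.coassoc
  rTensor_counit_comp_comul := LinearMap.ext fun h => by
    simpa using ((TensorProduct.lid k H).symm_apply_eq.mpr (hW.counit_left h).symm).symm
  lTensor_counit_comp_comul := LinearMap.ext fun h => by
    simpa using ((TensorProduct.rid k H).symm_apply_eq.mpr (hW.counit_right h).symm).symm

noncomputable def actOne (ρ : H →ₗ[k] A →ₗ[k] A) (d : H) : WithConv (H →ₗ[k] A) :=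
  toConv (ρ.flip 1 ∘ₗ LinearMap.mulRight k d)

@[simp] theorem actOne_apply (ρ : H →ₗ[k] A →ₗ[k] A) (d h : H) : actOne ρ d h = ρ (h * d) 1 := rfl

noncomputable def cocycleSlice (ς : H ⊗[k] H →ₗ[k] A) (g : H) : WithConv (H →ₗ[k] A) :=
  toConv (ς ∘ₗ (TensorProduct.mk k H H).flip g)

@[simp] theorem cocycleSlice_apply (ς : H ⊗[k] H →ₗ[k] A) (g h : H) :
    cocycleSlice ς g h = ς (h ⊗ₜ[k] g) := rfl

section
variable [CoalgebraStruct k H] {W : WeakHopfData k H} {ρ : H →ₗ[k] A →ₗ[k] A}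
  {ς : H ⊗[k] H →ₗ[k] A}

theorem actOne_mul_actOne_one (hΔ : (comul : H →ₗ[k] H ⊗[k] H) = W.Δ) (h2 : cond2 W ρ)
    (h11 : cond11 ρ) (d : H) : actOne ρ d * actOne ρ 1 = actOne ρ d := by
  ext h
  obtain ⟨n, x, y, hx⟩ := TensorProduct.exists_fin_sum_tmul (W.Δ h)
  rw [LinearMap.convMul_apply_of_comul_eq _ _ (hΔ ▸ hx), actOne_apply, ← h11,
    ← mul_one (ρ d 1), h2 h _ _ n x y hx]
  exact Finset.sum_congr rfl fun i _ => by rw [h11]; simp only [actOne_apply, mul_one]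

theorem actOne_one_mul_actOne (hΔ : (comul : H →ₗ[k] H ⊗[k] H) = W.Δ) (h2 : cond2 W ρ)
    (h11 : cond11 ρ) (c : H) : actOne ρ 1 * actOne ρ c = actOne ρ c := by
  ext h
  obtain ⟨n, x, y, hx⟩ := TensorProduct.exists_fin_sum_tmul (W.Δ h)
  rw [LinearMap.convMul_apply_of_comul_eq _ _ (hΔ ▸ hx), actOne_apply, ← h11,
    ← one_mul (ρ c 1), h2 h _ _ n x y hx]
  exact Finset.sum_congr rfl fun i _ => by rw [h11]; simp only [actOne_apply, mul_one]

theorem cocycleSlice_eq_sum_mul_actOne (hΔ : (comul : H →ₗ[k] H ⊗[k] H) = W.Δ)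
    (h19 : cond19 W ρ ς) {g : H} {m : ℕ} {u v : Fin m → H}
    (hg : W.Δ g = ∑ j, u j ⊗ₜ[k] v j) :
    cocycleSlice ς g = ∑ j, cocycleSlice ς (u j) * actOne ρ (v j) := by
  ext h
  obtain ⟨n, x, y, hx⟩ := TensorProduct.exists_fin_sum_tmul (W.Δ h)
  simp only [cocycleSlice_apply, h19 h g n x y m u v hx hg, ofConv_sum, LinearMap.coe_sum,
    Finset.sum_apply, LinearMap.convMul_apply_of_comul_eq _ _ (hΔ ▸ hx), actOne_apply]
  exact Finset.sum_comm

theorem cocycleSlice_eq_sum_actOne_mul (hΔ : (comul : H →ₗ[k] H ⊗[k] H) = W.Δ)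
    (h11 : cond11 ρ) (h18 : cond18 W ρ ς) (h19 : cond19 W ρ ς) {g : H} {m : ℕ}
    {u v : Fin m → H} (hg : W.Δ g = ∑ j, u j ⊗ₜ[k] v j) :
    cocycleSlice ς g = ∑ j, actOne ρ (u j) * cocycleSlice ς (v j) := by
  ext h
  obtain ⟨n, x, y, hx⟩ := TensorProduct.exists_fin_sum_tmul (W.Δ h)
  have twisted := h18 h g 1 n x y m u v hx hg
  simp only [h11 _ _] at twisted
  simp only [cocycleSlice_apply, h19 h g n x y m u v hx hg, ← twisted, ofConv_sum,
    LinearMap.coe_sum, Finset.sum_apply, LinearMap.convMul_apply_of_comul_eq _ _ (hΔ ▸ hx),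
    actOne_apply]
  exact Finset.sum_comm

end

section
variable [Coalgebra k H] {W : WeakHopfData k H} {ρ : H →ₗ[k] A →ₗ[k] A}
  {ς : H ⊗[k] H →ₗ[k] A}

theorem actOne_one_mul_cocycleSlice (hΔ : (comul : H →ₗ[k] H ⊗[k] H) = W.Δ) (h2 : cond2 W ρ)
    (h11 : cond11 ρ) (h18 : cond18 W ρ ς) (h19 : cond19 W ρ ς) (g : H) :
    actOne ρ 1 * cocycleSlice ς g = cocycleSlice ς g := by
  obtain ⟨m, u, v, hg⟩ := TensorProduct.exists_fin_sum_tmul (W.Δ g)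
  rw [cocycleSlice_eq_sum_actOne_mul hΔ h11 h18 h19 hg, Finset.mul_sum]
  simp_rw [← mul_assoc, actOne_one_mul_actOne hΔ h2 h11]

theorem cocycleSlice_mul_actOne_one (hΔ : (comul : H →ₗ[k] H ⊗[k] H) = W.Δ) (h2 : cond2 W ρ)
    (h11 : cond11 ρ) (h19 : cond19 W ρ ς) (g : H) :
    cocycleSlice ς g * actOne ρ 1 = cocycleSlice ς g := by
  obtain ⟨m, u, v, hg⟩ := TensorProduct.exists_fin_sum_tmul (W.Δ g)
  rw [cocycleSlice_eq_sum_mul_actOne hΔ h19 hg, Finset.sum_mul]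
  simp_rw [mul_assoc, actOne_mul_actOne_one hΔ h2 h11]

end

end

theorem statement10_general {k H A : Type*} [Field k] [Ring H] [Algebra k H] [Ring A] [Algebra k A]
    (W : WeakHopfData k H) (hW : IsWeakHopf W) (ρ : H →ₗ[k] A →ₗ[k] A)
    (ς : H ⊗[k] H →ₗ[k] A)
    (h2 : cond2 W ρ) (h11 : cond11 ρ)
    (h18 : cond18 W ρ ⇑ς) (h19 : cond19 W ρ ⇑ς) :
    ∀ (h g : H) (n : ℕ) (x y : Fin n → H),
      W.Δ h = ∑ i, x i ⊗ₜ[k] y i →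
        (∑ i, ρ (x i) 1 * ς (y i ⊗ₜ[k] g)) = ς (h ⊗ₜ[k] g) ∧
        (∑ i, ς (x i ⊗ₜ[k] g) * ρ (y i) 1) = ς (h ⊗ₜ[k] g) := by
  let := hW.toCoalgebra
  intro h g n x y hx
  have left := congr($(actOne_one_mul_cocycleSlice rfl h2 h11 h18 h19 g) h)
  have right := congr($(cocycleSlice_mul_actOne_one rfl h2 h11 h19 g) h)
  rw [LinearMap.convMul_apply_of_comul_eq _ _ hx] at left right
  simp only [actOne_apply, cocycleSlice_apply, mul_one] at left right
  exact ⟨left, right⟩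

/-- under conditions (2), (4), (11) and (17)–(22), one has
`(h⁽¹⁾·1_A)ς(h⁽²⁾⊗k) = ς(h⁽¹⁾⊗k)(h⁽²⁾·1_A) = ς(h⊗k)`. -/
theorem statement10 {k H A : Type*} [Field k] [Ring H] [Algebra k H] [Ring A] [Algebra k A]
    (W : WeakHopfData k H) (hW : IsWeakHopf W) (ρ : H →ₗ[k] A →ₗ[k] A)
    (ς : H ⊗[k] H →ₗ[k] A)
    (h2 : cond2 W ρ) (h4 : cond4 ρ) (h11 : cond11 ρ)
    (h17 : cond17 W ρ ⇑ς) (h18 : cond18 W ρ ⇑ς) (h19 : cond19 W ρ ⇑ς)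
    (h20 : cond20 W ρ ⇑ς) (h21 : cond21 W ρ ⇑ς) (h22 : cond22 W ρ) :
    ∀ (h g : H) (n : ℕ) (x y : Fin n → H),
      W.Δ h = ∑ i, x i ⊗ₜ[k] y i →
        (∑ i, ρ (x i) 1 * ς (y i ⊗ₜ[k] g)) = ς (h ⊗ₜ[k] g) ∧
        (∑ i, ς (x i ⊗ₜ[k] g) * ρ (y i) 1) = ς (h ⊗ₜ[k] g) :=
  statement10_general W hW ρ ς h2 h11 h18 h19
end

section
/- Let ς:H⊗H→A be a k-linear map such that ρ and ς satisfy conditions (11), (18) and (19). Then for all h,k ∈ H: (h⁽¹⁾k⁽¹⁾·1_A)ς(h⁽²⁾⊗k⁽²⁾) = (h⁽¹⁾·(k⁽¹⁾·1_A))ς(h⁽²⁾⊗k⁽²⁾) = ς(h⁽¹⁾⊗k⁽¹⁾)(h⁽²⁾k⁽²⁾·1_A) = ς(h⊗k). -/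
open scoped TensorProduct

theorem statement11_general {k H A : Type*} [Field k] [Ring H] [Algebra k H] [Ring A] [Algebra k A]
    (W : WeakHopfData k H) (ρ : H →ₗ[k] A →ₗ[k] A)
    (ς : H ⊗[k] H →ₗ[k] A)
    (h11 : cond11 ρ) (h18 : cond18 W ρ ⇑ς) (h19 : cond19 W ρ ⇑ς) :
    ∀ (h g : H) (n : ℕ) (x y : Fin n → H) (m : ℕ) (u v : Fin m → H),
      W.Δ h = ∑ i, x i ⊗ₜ[k] y i → W.Δ g = ∑ j, u j ⊗ₜ[k] v j →
        (∑ i, ∑ j, ρ (x i * u j) 1 * ς (y i ⊗ₜ[k] v j) = ς (h ⊗ₜ[k] g)) ∧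
        (∑ i, ∑ j, ρ (x i) (ρ (u j) 1) * ς (y i ⊗ₜ[k] v j) = ς (h ⊗ₜ[k] g)) ∧
        (∑ i, ∑ j, ς (x i ⊗ₜ[k] u j) * ρ (y i * v j) 1 = ς (h ⊗ₜ[k] g)) := by
  intro h g n x y m u v hΔh hΔg
  have hς : ∑ i, ∑ j, ς (x i ⊗ₜ[k] u j) * ρ (y i * v j) 1 = ς (h ⊗ₜ[k] g) :=
    (h19 h g n x y m u v hΔh hΔg).symm
  -- (18) at `a = 1_A` turns the left-hand side into that of (19).
  have hρρ : ∑ i, ∑ j, ρ (x i) (ρ (u j) 1) * ς (y i ⊗ₜ[k] v j) = ς (h ⊗ₜ[k] g) :=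
    (h18 h g 1 n x y m u v hΔh hΔg).trans hς
  refine ⟨?_, hρρ, hς⟩
  simpa only [h11 _ _] using hρρ

/-- under conditions (11), (18) and (19), one has
`(h⁽¹⁾k⁽¹⁾·1_A)ς(h⁽²⁾⊗k⁽²⁾) = (h⁽¹⁾·(k⁽¹⁾·1_A))ς(h⁽²⁾⊗k⁽²⁾)
  = ς(h⁽¹⁾⊗k⁽¹⁾)(h⁽²⁾k⁽²⁾·1_A) = ς(h⊗k)`. -/
theorem statement11 {k H A : Type*} [Field k] [Ring H] [Algebra k H] [Ring A] [Algebra k A]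
    (W : WeakHopfData k H) (hW : IsWeakHopf W) (ρ : H →ₗ[k] A →ₗ[k] A)
    (ς : H ⊗[k] H →ₗ[k] A)
    (h11 : cond11 ρ) (h18 : cond18 W ρ ⇑ς) (h19 : cond19 W ρ ⇑ς) :
    ∀ (h g : H) (n : ℕ) (x y : Fin n → H) (m : ℕ) (u v : Fin m → H),
      W.Δ h = ∑ i, x i ⊗ₜ[k] y i → W.Δ g = ∑ j, u j ⊗ₜ[k] v j →
        (∑ i, ∑ j, ρ (x i * u j) 1 * ς (y i ⊗ₜ[k] v j) = ς (h ⊗ₜ[k] g)) ∧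
        (∑ i, ∑ j, ρ (x i) (ρ (u j) 1) * ς (y i ⊗ₜ[k] v j) = ς (h ⊗ₜ[k] g)) ∧
        (∑ i, ∑ j, ς (x i ⊗ₜ[k] u j) * ρ (y i * v j) 1 = ς (h ⊗ₜ[k] g)) :=
  statement11_general W ρ ς h11 h18 h19
end

section
/- Let ς:H⊗H→A be a k-linear map such that ρ and ς satisfy conditions (2), (4), (11) and (17)–(22), and suppose ς is invertible, i.e. there is a k-linear map ς̄:H⊗H→A satisfying conditions (23) and (24). Then ς̄ is H^L-balanced, i.e. ς̄(hl⊗k)=ς̄(h⊗lk) for all h,k∈H and l∈H^L (so ς̄ factorizes through a map σ̄:H⊗_{H^L}H→A), and, writing σ̄(h,k):=ς̄(h⊗k) and σ(h,k):=ς(h⊗k), the map σ̄ satisfies conditions (13)–(16). Hence σ is an invertible cocycle in the sense of Böhm–Brzeziński. -/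
open scoped TensorProduct

/-!
Write `⋆` for the convolution product on `H ⊗ H →ₗ A` coming from the tensor-product coalgebra
`H ⊗ H`, and `e (h ⊗ g) = hg·1_A` (`mulActOne`). Conditions (23) and (24) say `e ⋆ ς̄ = ς̄` and
`ς ⋆ ς̄ = ς̄ ⋆ ς = e`, and by associativity also `ς̄ ⋆ e = ς̄`. Hence `ς` cancels: if `e ⋆ F = F`,
`e ⋆ G = G` and `ς ⋆ F = ς ⋆ G` then `F = G`, and symmetrically on the right.

Balancedness, (14) and (15) are identities `F = G` of this kind, with `F` the map `ς̄` precomposed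
with multiplication by `l ∈ H^L` or by `S⁻¹(l) ∈ H^R`. Since `Δ(l) = Δ(1)(l ⊗ 1) = (l ⊗ 1)Δ(1)` and
`Δ(S⁻¹ l) = (1 ⊗ S⁻¹ l)Δ(1)`, such precompositions pass through `⋆`, so `ς ⋆ F` and `ς ⋆ G` both
become `e` composed with a multiplication, and these agree by `(l h)·1 = (l·1)(h·1)` and
`(S⁻¹(l) h)·1 = (h·1)(l·1)`. Both identities follow from (2), (4), (11), (22) and the weak Hopf
algebra axioms; the second rests on `S⁻¹(l)·1 = l·1`, an instance of `r·1 = Π^L(r)·1` for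
`r ∈ H^R`. Conditions (13) and (16) are (23) and (24) themselves.
-/

open TensorProduct
open LinearMap (lTensor rTensor mulLeft mulRight)
open Algebra.TensorProduct (tmul_mul_tmul)

namespace TensorProduct

variable {R M N P : Type*} [CommSemiring R] [AddCommMonoid M] [Module R M]
  [AddCommMonoid N] [Module R N] [AddCommMonoid P] [Module R P]

theorem exists_fin_sum_tmul_eq (t : M ⊗[R] N) :
    ∃ (n : ℕ) (x : Fin n → M) (y : Fin n → N), t = ∑ i, x i ⊗ₜ[R] y i := by
  obtain ⟨s, rfl⟩ := exists_finset t
  refine ⟨s.card, fun i => (s.equivFin.symm i).1.1, fun i => (s.equivFin.symm i).1.2, ?_⟩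
  rw [← Finset.sum_coe_sort s]
  exact (Fintype.sum_equiv s.equivFin.symm _ _ fun _ => rfl).symm

theorem sum_apply_eq_of_sum_tmul_eq (B : M →ₗ[R] N →ₗ[R] P) {ι κ : Type*} [Fintype ι]
    [Fintype κ] {x : ι → M} {y : ι → N} {p : κ → M} {q : κ → N}
    (h : ∑ i, x i ⊗ₜ[R] y i = ∑ j, p j ⊗ₜ[R] q j) :
    ∑ i, B (x i) (y i) = ∑ j, B (p j) (q j) := by
  simpa using congrArg (lift B) h

end TensorProduct

section

variable {k H : Type*} [Field k] [Ring H] [Algebra k H] {W : WeakHopfData k H}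

theorem piL_eq_sum {ι : Type*} [Fintype ι] {u v : ι → H}
    (hu : W.Δ 1 = ∑ j, u j ⊗ₜ[k] v j) (h : H) : piL W h = ∑ j, W.ε (u j * h) • v j := by
  simp [piL, hu]

theorem piR_eq_sum {ι : Type*} [Fintype ι] {u v : ι → H}
    (hu : W.Δ 1 = ∑ j, u j ⊗ₜ[k] v j) (h : H) : piR W h = ∑ j, W.ε (h * v j) • u j := by
  simp [piR, hu]

variable (W) in
noncomputable def piLₗ : H →ₗ[k] H where
  toFun := piL W
  map_add' a b := by
    obtain ⟨n, u, v, hu⟩ := exists_fin_sum_tmul_eq (W.Δ 1)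
    simp [piL_eq_sum hu, mul_add, add_smul, Finset.sum_add_distrib]
  map_smul' c a := by
    obtain ⟨n, u, v, hu⟩ := exists_fin_sum_tmul_eq (W.Δ 1)
    simp [piL_eq_sum hu, Finset.smul_sum, smul_smul]

variable (W) in
noncomputable def piRₗ : H →ₗ[k] H where
  toFun := piR W
  map_add' a b := by
    obtain ⟨n, u, v, hu⟩ := exists_fin_sum_tmul_eq (W.Δ 1)
    simp [piR_eq_sum hu, add_mul, add_smul, Finset.sum_add_distrib]
  map_smul' c a := by
    obtain ⟨n, u, v, hu⟩ := exists_fin_sum_tmul_eq (W.Δ 1)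
    simp [piR_eq_sum hu, Finset.smul_sum, smul_smul]

@[simp] theorem piLₗ_apply (h : H) : piLₗ W h = piL W h := rfl

@[simp] theorem piRₗ_apply (h : H) : piRₗ W h = piR W h := rfl

end

section Action

variable {k H A : Type*} [Field k] [Ring H] [Algebra k H] [Ring A] [Algebra k A]
  {W : WeakHopfData k H} {ρ : H →ₗ[k] A →ₗ[k] A}

theorem cond2.act_mul (h2 : cond2 W ρ) {h : H} (a a' : A) {ι : Type*} [Fintype ι]
    {x y : ι → H} (hxy : W.Δ h = ∑ i, x i ⊗ₜ[k] y i) :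
    ρ h (a * a') = ∑ i, ρ (x i) a * ρ (y i) a' := by
  let e := Fintype.equivFin ι
  have hxy' : W.Δ h = ∑ i, x (e.symm i) ⊗ₜ[k] y (e.symm i) := by
    rw [hxy]; exact (Fintype.sum_equiv e.symm _ _ fun _ => rfl).symm
  rw [h2 h a a' _ _ _ hxy']
  exact Fintype.sum_equiv e.symm _ _ fun _ => rfl

theorem cond2.sum_act_one_mul_act (h2 : cond2 W ρ) (h4 : cond4 ρ) {ι : Type*} [Fintype ι]
    {u v : ι → H} (hu : W.Δ 1 = ∑ j, u j ⊗ₜ[k] v j) (a : A) :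
    ∑ j, ρ (u j) 1 * ρ (v j) a = a := by
  rw [← h2.act_mul 1 a hu, one_mul, h4]

theorem cond22.mul_act_piR (h22 : cond22 W ρ) (y : H) (a : A) :
    a * ρ (piR W y) 1 = ρ (piR W y) a := by
  obtain ⟨n, u, v, hu⟩ := exists_fin_sum_tmul_eq (W.Δ 1)
  have := sum_apply_eq_of_sum_tmul_eq
    ((LinearMap.lsmul k A).flip.compl₂ (W.ε ∘ₗ mulLeft k y)) (h22 a n u v hu)
  simpa [piR_eq_sum hu, Finset.mul_sum] using this

theorem sum_act_mul_one_mul_act (h2 : cond2 W ρ) (h4 : cond4 ρ) (h11 : cond11 ρ)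
    (h22 : cond22 W ρ) {n : ℕ} {u v : Fin n → H} (hu : W.Δ 1 = ∑ j, u j ⊗ₜ[k] v j)
    (c : H) (a : A) : ∑ j, ρ (u j * c) 1 * ρ (v j) a = ρ c 1 * a := by
  have := sum_apply_eq_of_sum_tmul_eq ((LinearMap.mul k A).compl₂ (ρ.flip a))
    (h22 (ρ c 1) n u v hu)
  simp only [LinearMap.compl₂_apply, LinearMap.mul_apply', LinearMap.flip_apply] at this
  calc ∑ j, ρ (u j * c) 1 * ρ (v j) a = ∑ j, ρ (u j) (ρ c 1) * ρ (v j) a := by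
        simp only [h11 _ c]
    _ = ρ c 1 * a := by
        rw [← this]; simp only [mul_assoc, ← Finset.mul_sum, h2.sum_act_one_mul_act h4 hu]

end Action

section

variable {k H A : Type*} [Field k] [Ring H] [Algebra k H] [Ring A] [Algebra k A]

noncomputable def mulActOne (ρ : H →ₗ[k] A →ₗ[k] A) : H ⊗[k] H →ₗ[k] A :=
  ρ.flip 1 ∘ₗ LinearMap.mul' k H

@[simp] theorem mulActOne_tmul (ρ : H →ₗ[k] A →ₗ[k] A) (a b : H) :
    mulActOne ρ (a ⊗ₜ[k] b) = ρ (a * b) 1 := rfl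

-- `ς̄ ⋆ actCounit W ρ c` is `h ⊗ g ↦ ∑ ς̄(h⁽¹⁾ ⊗ g)(h⁽²⁾·c)`, the left-hand side of (15).
noncomputable def actCounit (W : WeakHopfData k H) (ρ : H →ₗ[k] A →ₗ[k] A) (c : A) :
    H ⊗[k] H →ₗ[k] A :=
  (TensorProduct.rid k A).toLinearMap ∘ₗ map (ρ.flip c) W.ε

@[simp] theorem actCounit_tmul (W : WeakHopfData k H) (ρ : H →ₗ[k] A →ₗ[k] A) (c : A)
    (a b : H) : actCounit W ρ c (a ⊗ₜ[k] b) = W.ε b • ρ a c := by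
  simp [actCounit]

end

namespace IsWeakHopf

variable {k H A : Type*} [Field k] [Ring H] [Algebra k H] [Ring A] [Algebra k A]
  {W : WeakHopfData k H}

variable (hW : IsWeakHopf W)
include hW

theorem sum_counit_smul_left {h : H} {ι : Type*} [Fintype ι] {x y : ι → H}
    (hxy : W.Δ h = ∑ i, x i ⊗ₜ[k] y i) : ∑ i, W.ε (x i) • y i = h := by
  simpa [hxy] using hW.counit_left h

theorem sum_counit_smul_right {h : H} {ι : Type*} [Fintype ι] {x y : ι → H}
    (hxy : W.Δ h = ∑ i, x i ⊗ₜ[k] y i) : ∑ i, W.ε (y i) • x i = h := by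
  simpa [hxy] using hW.counit_right h

theorem comul_mul_eq_sum {a b : H} {ι κ : Type*} [Fintype ι] [Fintype κ]
    {x y : ι → H} {u v : κ → H} (ha : W.Δ a = ∑ i, x i ⊗ₜ[k] y i)
    (hb : W.Δ b = ∑ j, u j ⊗ₜ[k] v j) :
    W.Δ (a * b) = ∑ p : ι × κ, (x p.1 * u p.2) ⊗ₜ[k] (y p.1 * v p.2) := by
  rw [hW.comul_mul, ha, hb, Finset.sum_mul_sum, Fintype.sum_prod_type]
  simp [tmul_mul_tmul]

theorem sum_comul_tmul {h : H} {ι : Type*} [Fintype ι] {x y : ι → H}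
    (hxy : W.Δ h = ∑ i, x i ⊗ₜ[k] y i) :
    ∑ i, W.Δ (x i) ⊗ₜ[k] y i =
      (TensorProduct.assoc k H H H).symm (∑ i, x i ⊗ₜ[k] W.Δ (y i)) := by
  have := congrArg (TensorProduct.assoc k H H H).symm (hW.coassoc h)
  simpa [hxy] using this

section ComulOne

variable {ι : Type*} [Fintype ι] {u v : ι → H} (hu : W.Δ 1 = ∑ j, u j ⊗ₜ[k] v j)
include hu

theorem sum_tmul_comul_one_eq_mul_left :
    ∑ j, u j ⊗ₜ[k] W.Δ (v j) =
      ∑ j, ∑ j', u j ⊗ₜ[k] ((v j * u j') ⊗ₜ[k] v j') := by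
  have := hW.weak_comul_one₁
  simp only [hu, map_sum, LinearMap.lTensor_tmul, sum_tmul, tmul_sum, Finset.sum_mul,
    Finset.mul_sum, assoc_tmul, tmul_mul_tmul, mul_one, one_mul] at this
  rw [this, Finset.sum_comm]

theorem sum_tmul_comul_one_eq_mul_right :
    ∑ j, u j ⊗ₜ[k] W.Δ (v j) =
      ∑ j, ∑ j', u j ⊗ₜ[k] ((u j' * v j) ⊗ₜ[k] v j') := by
  have := hW.weak_comul_one₂
  simp only [hu, map_sum, LinearMap.lTensor_tmul, sum_tmul, tmul_sum, Finset.sum_mul,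
    Finset.mul_sum, assoc_tmul, tmul_mul_tmul, mul_one, one_mul] at this
  rw [this, Finset.sum_comm]

theorem sum_comul_tmul_one_eq_mul_right :
    ∑ j, W.Δ (u j) ⊗ₜ[k] v j =
      ∑ j, ∑ j', (u j ⊗ₜ[k] (u j' * v j)) ⊗ₜ[k] v j' := by
  simp [hW.sum_comul_tmul hu, hW.sum_tmul_comul_one_eq_mul_right hu]

end ComulOne

theorem comul_piL_eq_comul_one_mul (m : H) : W.Δ (piL W m) = W.Δ 1 * (piL W m ⊗ₜ[k] 1) := by
  obtain ⟨n, u, v, hu⟩ := exists_fin_sum_tmul_eq (W.Δ 1)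
  have := congrArg ((TensorProduct.lid k (H ⊗[k] H)).toLinearMap ∘ₗ
    rTensor (H ⊗[k] H) (W.ε ∘ₗ mulRight k m))
    (hW.sum_tmul_comul_one_eq_mul_right hu)
  simp only [LinearMap.comp_apply, map_sum, LinearMap.rTensor_tmul, LinearEquiv.coe_coe,
    TensorProduct.lid_tmul, LinearMap.mulRight_apply] at this
  rw [piL_eq_sum hu, map_sum]
  simp only [map_smul, this, hu, Finset.sum_mul, tmul_mul_tmul, mul_one,
    Finset.mul_sum, sum_tmul, mul_smul_comm, smul_tmul']

theorem comul_piR_eq_mul_comul_one (m : H) :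
    W.Δ (piR W m) = ((1 : H) ⊗ₜ[k] piR W m) * W.Δ 1 := by
  obtain ⟨n, u, v, hu⟩ := exists_fin_sum_tmul_eq (W.Δ 1)
  have := congrArg ((TensorProduct.rid k (H ⊗[k] H)).toLinearMap ∘ₗ
    lTensor (H ⊗[k] H) (W.ε ∘ₗ mulLeft k m)) (hW.sum_comul_tmul_one_eq_mul_right hu)
  simp only [LinearMap.comp_apply, map_sum, LinearMap.lTensor_tmul, LinearEquiv.coe_coe,
    TensorProduct.rid_tmul, LinearMap.mulLeft_apply] at this
  rw [piR_eq_sum hu, map_sum]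
  simp only [map_smul, this, hu, Finset.mul_sum, tmul_mul_tmul, one_mul,
    Finset.sum_mul, tmul_sum, smul_mul_assoc, tmul_smul]

theorem lTensor_piL_comul (h : H) :
    lTensor H (piLₗ W) (W.Δ h) = W.Δ 1 * (h ⊗ₜ[k] 1) := by
  obtain ⟨n, u, v, hu⟩ := exists_fin_sum_tmul_eq (W.Δ 1)
  obtain ⟨N, x, y, hxy⟩ := exists_fin_sum_tmul_eq (W.Δ h)
  choose M a b hab using fun j => exists_fin_sum_tmul_eq (W.Δ (u j))
  let L : H ⊗[k] H ⊗[k] H →ₗ[k] H ⊗[k] H := ∑ i, rTensor H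
    ((TensorProduct.rid k H).toLinearMap ∘ₗ
      map (mulRight k (x i)) (W.ε ∘ₗ mulRight k (y i)))
  have key := congrArg L (hW.sum_comul_tmul_one_eq_mul_right hu)
  simp only [L, hab, sum_tmul, map_sum, LinearMap.sum_apply, LinearMap.rTensor_tmul,
    LinearMap.comp_apply, map_tmul, LinearEquiv.coe_coe, TensorProduct.rid_tmul,
    LinearMap.mulRight_apply] at key
  calc lTensor H (piLₗ W) (W.Δ h)
      = ∑ j, ∑ j', ∑ i, (W.ε (u j' * v j * y i) • (u j * x i)) ⊗ₜ[k] v j' := by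
        have hmul : W.Δ h = W.Δ 1 * W.Δ h := by rw [← hW.comul_mul, one_mul]
        rw [hmul, hu, hxy]
        simp only [Finset.sum_mul_sum, tmul_mul_tmul, map_sum,
          LinearMap.lTensor_tmul, piLₗ_apply, piL_eq_sum hu, tmul_sum, tmul_smul, mul_assoc,
          smul_tmul']
        exact Finset.sum_congr rfl fun j _ => Finset.sum_comm
    _ = ∑ j, ∑ p, ∑ i, (W.ε (b j p * y i) • (a j p * x i)) ⊗ₜ[k] v j := key.symm
    _ = ∑ j, (u j * h) ⊗ₜ[k] v j := by
        refine Finset.sum_congr rfl fun j _ => ?_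
        rw [← hW.sum_counit_smul_right (hW.comul_mul_eq_sum (hab j) hxy)]
        simp [sum_tmul, Fintype.sum_prod_type]
    _ = W.Δ 1 * (h ⊗ₜ[k] 1) := by
        simp [hu, Finset.sum_mul, tmul_mul_tmul]

theorem rTensor_piR_comul (h : H) :
    rTensor H (piRₗ W) (W.Δ h) = ((1 : H) ⊗ₜ[k] h) * W.Δ 1 := by
  obtain ⟨n, u, v, hu⟩ := exists_fin_sum_tmul_eq (W.Δ 1)
  obtain ⟨N, x, y, hxy⟩ := exists_fin_sum_tmul_eq (W.Δ h)
  choose M a b hab using fun j => exists_fin_sum_tmul_eq (W.Δ (v j))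
  let L : H ⊗[k] (H ⊗[k] H) →ₗ[k] H ⊗[k] H := ∑ i, lTensor H
    ((TensorProduct.lid k H).toLinearMap ∘ₗ
      map (W.ε ∘ₗ mulLeft k (x i)) (mulLeft k (y i)))
  have key := congrArg L (hW.sum_tmul_comul_one_eq_mul_right hu)
  simp only [L, hab, tmul_sum, map_sum, LinearMap.sum_apply, LinearMap.lTensor_tmul,
    LinearMap.comp_apply, map_tmul, LinearEquiv.coe_coe, TensorProduct.lid_tmul,
    LinearMap.mulLeft_apply] at key
  calc rTensor H (piRₗ W) (W.Δ h)
      = ∑ j, ∑ j', ∑ i, u j ⊗ₜ[k] (W.ε (x i * (u j' * v j)) • (y i * v j')) := by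
        have hmul : W.Δ h = W.Δ h * W.Δ 1 := by rw [← hW.comul_mul, mul_one]
        rw [hmul, hu, hxy]
        simp only [Finset.sum_mul_sum, tmul_mul_tmul, map_sum,
          LinearMap.rTensor_tmul, piRₗ_apply, piR_eq_sum hu, sum_tmul, smul_tmul, mul_assoc]
        exact (Finset.sum_comm.trans (Finset.sum_congr rfl fun _ _ => Finset.sum_comm)).trans
          Finset.sum_comm
    _ = ∑ j, ∑ p, ∑ i, u j ⊗ₜ[k] (W.ε (x i * a j p) • (y i * b j p)) := key.symm
    _ = ∑ j, u j ⊗ₜ[k] (h * v j) := by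
        refine Finset.sum_congr rfl fun j _ => ?_
        rw [← hW.sum_counit_smul_left (hW.comul_mul_eq_sum hxy (hab j))]
        simp [tmul_sum, Fintype.sum_prod_type]
        exact Finset.sum_comm
    _ = ((1 : H) ⊗ₜ[k] h) * W.Δ 1 := by
        simp [hu, Finset.mul_sum, tmul_mul_tmul]

theorem comul_one_eq_sum_piR_tmul_piL {ι : Type*} [Fintype ι] {u v : ι → H}
    (hu : W.Δ 1 = ∑ j, u j ⊗ₜ[k] v j) :
    W.Δ 1 = ∑ j, piR W (u j) ⊗ₜ[k] piL W (v j) := by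
  have h := LinearMap.congr_fun
    (LinearMap.lTensor_comp_rTensor (f := piRₗ W) (g := piLₗ W)) (W.Δ 1)
  rw [LinearMap.comp_apply, hW.rTensor_piR_comul, ← Algebra.TensorProduct.one_def, one_mul,
    hW.lTensor_piL_comul, ← Algebra.TensorProduct.one_def, mul_one] at h
  simpa [hu] using h

theorem counit_mul_piL (h m : H) : W.ε (h * piL W m) = W.ε (h * m) := by
  obtain ⟨n, u, v, hu⟩ := exists_fin_sum_tmul_eq (W.Δ 1)
  have := (hW.weak_counit h 1 m n u v hu).2
  rw [mul_one] at this
  simp [piL_eq_sum hu, Finset.mul_sum, this, mul_comm]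

theorem piL_mul_piL_eq_piL_mul (h m : H) : piL W (h * piL W m) = piL W (h * m) := by
  obtain ⟨n, u, v, hu⟩ := exists_fin_sum_tmul_eq (W.Δ 1)
  rw [piL_eq_sum hu, piL_eq_sum hu (h * m)]
  simp only [← mul_assoc, hW.counit_mul_piL]

theorem piL_eq_self_of_comul_eq {z : H} (hz : W.Δ z = W.Δ 1 * (z ⊗ₜ[k] 1)) : piL W z = z := by
  obtain ⟨n, u, v, hu⟩ := exists_fin_sum_tmul_eq (W.Δ 1)
  rw [hu, Finset.sum_mul] at hz
  simp only [tmul_mul_tmul, mul_one] at hz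
  rw [piL_eq_sum hu, hW.sum_counit_smul_left hz]

theorem piL_piL (m : H) : piL W (piL W m) = piL W m :=
  hW.piL_eq_self_of_comul_eq (hW.comul_piL_eq_comul_one_mul m)

theorem piL_mul_piR_comm (x y : H) : piL W x * piR W y = piR W y * piL W x := by
  obtain ⟨n, u, v, hu⟩ := exists_fin_sum_tmul_eq (W.Δ 1)
  let M : H ⊗[k] (H ⊗[k] H) →ₗ[k] H := (TensorProduct.lid k H).toLinearMap ∘ₗ
    map (W.ε ∘ₗ mulRight k x)
      ((TensorProduct.rid k H).toLinearMap ∘ₗ lTensor H (W.ε ∘ₗ mulLeft k y))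
  have key := congrArg M ((hW.sum_tmul_comul_one_eq_mul_left hu).symm.trans
    (hW.sum_tmul_comul_one_eq_mul_right hu))
  simp only [M, map_sum, LinearMap.comp_apply, map_tmul, LinearMap.lTensor_tmul,
    LinearEquiv.coe_coe, TensorProduct.rid_tmul, TensorProduct.lid_tmul,
    LinearMap.mulRight_apply, LinearMap.mulLeft_apply] at key
  rw [piL_eq_sum hu, piR_eq_sum hu, Finset.sum_mul_sum, Finset.sum_mul_sum]
  conv_rhs => rw [Finset.sum_comm]
  simpa [smul_mul_assoc, mul_smul_comm, smul_smul, mul_comm] using key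

theorem comul_piL_eq_mul_comul_one (m : H) : W.Δ (piL W m) = (piL W m ⊗ₜ[k] 1) * W.Δ 1 := by
  obtain ⟨n, u, v, hu⟩ := exists_fin_sum_tmul_eq (W.Δ 1)
  have hu' := hW.comul_one_eq_sum_piR_tmul_piL hu
  rw [hW.comul_piL_eq_comul_one_mul, hu', Finset.sum_mul, Finset.mul_sum]
  simp [tmul_mul_tmul, hW.piL_mul_piR_comm]

theorem piL_mul_piL_eq_piL_piL_mul (x y : H) : piL W x * piL W y = piL W (piL W x * y) := by
  rw [← hW.piL_mul_piL_eq_piL_mul, eq_comm]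
  refine hW.piL_eq_self_of_comul_eq ?_
  have hΔ : W.Δ 1 * W.Δ 1 = W.Δ 1 := by rw [← hW.comul_mul, one_mul]
  calc W.Δ (piL W x * piL W y)
      = W.Δ 1 * ((piL W x ⊗ₜ[k] 1) * W.Δ 1) * (piL W y ⊗ₜ[k] 1) := by
        rw [hW.comul_mul, hW.comul_piL_eq_comul_one_mul x, hW.comul_piL_eq_comul_one_mul y]
        simp only [mul_assoc]
    _ = W.Δ 1 * ((piL W x * piL W y) ⊗ₜ[k] 1) := by
        rw [← hW.comul_piL_eq_mul_comul_one, hW.comul_piL_eq_comul_one_mul, ← mul_assoc, hΔ,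
          mul_assoc, tmul_mul_tmul, mul_one]

theorem sum_piR_mul_S {h : H} {n : ℕ} {x y : Fin n → H}
    (hxy : W.Δ h = ∑ i, x i ⊗ₜ[k] y i) :
    ∑ i, piR W (x i) * W.S (y i) = W.S h := by
  choose na a b hab using fun i => exists_fin_sum_tmul_eq (W.Δ (x i))
  choose nc c d hcd using fun i => exists_fin_sum_tmul_eq (W.Δ (y i))
  let T : H ⊗[k] H ⊗[k] H →ₗ[k] H := LinearMap.mul' k H ∘ₗ
    map (LinearMap.mul' k H ∘ₗ rTensor H W.S) W.S
  have key := congrArg T (hW.sum_comul_tmul hxy)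
  simp only [T, hab, hcd, sum_tmul, tmul_sum, map_sum, LinearMap.comp_apply,
    map_tmul, LinearMap.rTensor_tmul, LinearMap.mul'_apply,
    assoc_symm_tmul] at key
  rw [← hW.antipode_mid h n x y hxy nc c d hcd, ← key]
  simp only [← hW.antipode_right (x _) (na _) (a _) (b _) (hab _), Finset.sum_mul]

theorem sum_S_mul_piL {h : H} {n : ℕ} {x y : Fin n → H}
    (hxy : W.Δ h = ∑ i, x i ⊗ₜ[k] y i) :
    ∑ i, W.S (x i) * piL W (y i) = W.S h := by
  choose nc c d hcd using fun i => exists_fin_sum_tmul_eq (W.Δ (y i))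
  rw [← hW.antipode_mid h n x y hxy nc c d hcd]
  simp only [← hW.antipode_left (y _) (nc _) (c _) (d _) (hcd _), Finset.mul_sum, mul_assoc]

theorem sum_mul_S_mul_eq_S {n : ℕ} {u v : Fin n → H} (hu : W.Δ 1 = ∑ j, u j ⊗ₜ[k] v j)
    (z : H) : ∑ j, u j * W.S (z * v j) = W.S z := by
  obtain ⟨N, x, y, hxy⟩ := exists_fin_sum_tmul_eq (W.Δ z)
  have key := congrArg (LinearMap.mul' k H ∘ₗ lTensor H W.S) (hW.rTensor_piR_comul z)
  simp only [hxy, hu, Finset.mul_sum, tmul_mul_tmul, one_mul, map_sum,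
    LinearMap.comp_apply, LinearMap.rTensor_tmul, LinearMap.lTensor_tmul, piRₗ_apply,
    LinearMap.mul'_apply] at key
  rw [← key, hW.sum_piR_mul_S hxy]

theorem S_piR (y : H) : W.S (piR W y) = piL W (piR W y) := by
  obtain ⟨n, u, v, hu⟩ := exists_fin_sum_tmul_eq (W.Δ 1)
  have hΔ : W.Δ (piR W y) = ∑ j, u j ⊗ₜ[k] (piR W y * v j) := by
    simp [hW.comul_piR_eq_mul_comul_one, hu, Finset.mul_sum, tmul_mul_tmul]
  rw [← hW.antipode_left _ n u _ hΔ, hW.sum_mul_S_mul_eq_S hu]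

theorem counit_mul_S (z h : H) : W.ε (z * W.S h) = W.ε (z * piR W h) := by
  obtain ⟨n, x, y, hxy⟩ := exists_fin_sum_tmul_eq (W.Δ h)
  rw [← hW.sum_S_mul_piL hxy, ← hW.antipode_right h n x y hxy]
  simp only [Finset.mul_sum, map_sum, ← mul_assoc, hW.counit_mul_piL]

theorem piL_S (h : H) : piL W (W.S h) = piL W (piR W h) := by
  obtain ⟨n, u, v, hu⟩ := exists_fin_sum_tmul_eq (W.Δ 1)
  simp only [piL_eq_sum hu, hW.counit_mul_S]

theorem piR_Sinv_of_mem_HL {l : H} (hl : l ∈ HL W) : piR W (W.Sinv l) = W.Sinv l := by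
  obtain ⟨m, rfl⟩ := hl
  apply Function.LeftInverse.injective hW.Sinv_S
  rw [hW.S_piR, ← hW.piL_S, hW.S_Sinv, hW.piL_piL]

theorem piL_Sinv_of_mem_HL {l : H} (hl : l ∈ HL W) : piL W (W.Sinv l) = l := by
  rw [← hW.piR_Sinv_of_mem_HL hl, ← hW.S_piR, hW.piR_Sinv_of_mem_HL hl, hW.S_Sinv]

theorem comul_Sinv_eq_mul_comul_one {l : H} (hl : l ∈ HL W) :
    W.Δ (W.Sinv l) = ((1 : H) ⊗ₜ[k] W.Sinv l) * W.Δ 1 := by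
  rw [← hW.piR_Sinv_of_mem_HL hl, hW.comul_piR_eq_mul_comul_one, hW.piR_Sinv_of_mem_HL hl]

section Action

variable {ρ : H →ₗ[k] A →ₗ[k] A} (h2 : cond2 W ρ) (h4 : cond4 ρ) (h11 : cond11 ρ)
  (h22 : cond22 W ρ)
include h2 h4 h11 h22

theorem act_of_mem_HL {l : H} (hl : l ∈ HL W) (a : A) : ρ l a = ρ l 1 * a := by
  obtain ⟨m, rfl⟩ := hl
  obtain ⟨n, u, v, hu⟩ := exists_fin_sum_tmul_eq (W.Δ 1)
  have hΔ : W.Δ (piL W m) = ∑ j, (u j * piL W m) ⊗ₜ[k] v j := by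
    simp [hW.comul_piL_eq_comul_one_mul, hu, Finset.sum_mul, tmul_mul_tmul]
  rw [← one_mul a, h2.act_mul 1 a hΔ, sum_act_mul_one_mul_act h2 h4 h11 h22 hu, one_mul]

theorem act_one_eq_sum_piL {h : H} {ι : Type*} [Fintype ι] {x y : ι → H}
    (hxy : W.Δ h = ∑ i, x i ⊗ₜ[k] y i) :
    ρ h 1 = ∑ i, ρ (x i) 1 * ρ (piL W (y i)) 1 := by
  obtain ⟨n, u, v, hu⟩ := exists_fin_sum_tmul_eq (W.Δ 1)
  have key := hW.lTensor_piL_comul h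
  rw [hxy, hu, Finset.sum_mul] at key
  simp only [map_sum, LinearMap.lTensor_tmul, piLₗ_apply, tmul_mul_tmul, mul_one] at key
  have := sum_apply_eq_of_sum_tmul_eq ((LinearMap.mul k A).compl₁₂ (ρ.flip 1) (ρ.flip 1)) key
  simp only [LinearMap.compl₁₂_apply, LinearMap.mul_apply', LinearMap.flip_apply] at this
  rw [this, sum_act_mul_one_mul_act h2 h4 h11 h22 hu, mul_one]

-- Expand `Δ (Π^R y)` with legs in `H^R ⊗ H^L`; as `H^L` and `H^R` commute,
-- `Π^L (Π^R y * Π^L x) = Π^L x * Π^L (Π^R y)`.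
theorem act_piR_one (y : H) : ρ (piR W y) 1 = ρ (piL W (piR W y)) 1 := by
  obtain ⟨n, u, v, hu⟩ := exists_fin_sum_tmul_eq (W.Δ 1)
  have hu' := hW.comul_one_eq_sum_piR_tmul_piL hu
  have hΔ : W.Δ (piR W y) = ∑ j, piR W (u j) ⊗ₜ[k] (piR W y * piL W (v j)) := by
    simp [hW.comul_piR_eq_mul_comul_one, hu', Finset.mul_sum, tmul_mul_tmul]
  have hproj := sum_apply_eq_of_sum_tmul_eq ((LinearMap.mul k A).compl₁₂ (ρ.flip 1)
    (ρ.flip 1 ∘ₗ mulRight k (piL W (piR W y)))) (hu'.symm.trans hu)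
  simp only [LinearMap.compl₁₂_apply, LinearMap.mul_apply', LinearMap.flip_apply,
    LinearMap.comp_apply, LinearMap.mulRight_apply] at hproj
  calc ρ (piR W y) 1
      = ∑ j, ρ (piR W (u j)) 1 * ρ (piL W (v j) * piL W (piR W y)) 1 := by
        simp only [hW.act_one_eq_sum_piL h2 h4 h11 h22 hΔ, ← hW.piL_mul_piR_comm,
          ← hW.piL_mul_piL_eq_piL_piL_mul]
    _ = ∑ j, ρ (u j) 1 * ρ (v j) (ρ (piL W (piR W y)) 1) := by
        simp only [hproj, h11 _ (piL W (piR W y))]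
    _ = ρ (piL W (piR W y)) 1 := h2.sum_act_one_mul_act h4 hu _

theorem act_Sinv_one_of_mem_HL {l : H} (hl : l ∈ HL W) : ρ (W.Sinv l) 1 = ρ l 1 := by
  rw [← hW.piR_Sinv_of_mem_HL hl, hW.act_piR_one h2 h4 h11 h22, hW.piR_Sinv_of_mem_HL hl,
    hW.piL_Sinv_of_mem_HL hl]

theorem act_mul_one_of_mem_HL {l : H} (hl : l ∈ HL W) (w : H) :
    ρ (l * w) 1 = ρ l 1 * ρ w 1 := by
  rw [← h11, hW.act_of_mem_HL h2 h4 h11 h22 hl]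

theorem act_Sinv_mul_one_of_mem_HL {l : H} (hl : l ∈ HL W) (w : H) :
    ρ (W.Sinv l * w) 1 = ρ w 1 * ρ l 1 := by
  rw [← h11, ← hW.piR_Sinv_of_mem_HL hl, ← h22.mul_act_piR, hW.piR_Sinv_of_mem_HL hl,
    hW.act_Sinv_one_of_mem_HL h2 h4 h11 h22 hl]

end Action

section Convolution

noncomputable abbrev toCoalgebra_s13 : Coalgebra k H where
  comul := W.Δ
  counit := W.ε
  coassoc := LinearMap.ext hW.coassoc
  rTensor_counit_comp_comul := LinearMap.ext fun h =>
    (TensorProduct.lid k H).injective (by simpa using hW.counit_left h)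
  lTensor_counit_comp_comul := LinearMap.ext fun h =>
    (TensorProduct.rid k H).injective (by simpa using hW.counit_right h)

noncomputable def conv (f g : H ⊗[k] H →ₗ[k] A) : H ⊗[k] H →ₗ[k] A :=
  letI := hW.toCoalgebra_s13
  (WithConv.toConv f * WithConv.toConv g).ofConv

theorem conv_assoc (f g h : H ⊗[k] H →ₗ[k] A) :
    hW.conv (hW.conv f g) h = hW.conv f (hW.conv g h) :=
  letI := hW.toCoalgebra_s13
  congrArg WithConv.ofConv (mul_assoc (WithConv.toConv f) (WithConv.toConv g) (WithConv.toConv h))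

theorem conv_tmul (f g : H ⊗[k] H →ₗ[k] A) {a b : H} {ι κ : Type*} [Fintype ι]
    [Fintype κ] {x y : ι → H} {u v : κ → H}
    (ha : W.Δ a = ∑ i, x i ⊗ₜ[k] y i) (hb : W.Δ b = ∑ j, u j ⊗ₜ[k] v j) :
    hW.conv f g (a ⊗ₜ[k] b) = ∑ i, ∑ j, f (x i ⊗ₜ[k] u j) * g (y i ⊗ₜ[k] v j) := by
  let := hW.toCoalgebra_s13
  have ha' : Coalgebra.comul (R := k) a = ∑ i, x i ⊗ₜ[k] y i := ha
  have hb' : Coalgebra.comul (R := k) b = ∑ j, u j ⊗ₜ[k] v j := hb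
  simp only [conv, LinearMap.convMul_apply, comul_tmul, ha', hb', sum_tmul,
    tmul_sum, map_sum]
  simp [Finset.sum_comm (γ := κ)]

theorem eq_of_conv_left_eq {s t e F G : H ⊗[k] H →ₗ[k] A} (hts : hW.conv t s = e)
    (hF : hW.conv e F = F) (hG : hW.conv e G = G) (h : hW.conv s F = hW.conv s G) : F = G := by
  rw [← hF, ← hG, ← hts, hW.conv_assoc, hW.conv_assoc, h]

theorem eq_of_conv_right_eq {s t e F G : H ⊗[k] H →ₗ[k] A} (hst : hW.conv s t = e)
    (hF : hW.conv F e = F) (hG : hW.conv G e = G) (h : hW.conv F s = hW.conv G s) : F = G := by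
  rw [← hF, ← hG, ← hst, ← hW.conv_assoc, ← hW.conv_assoc, h]

theorem conv_comp_map {f g f₁ f₂ g₁ g₂ : H →ₗ[k] H} (hf : W.Δ ∘ₗ f = map f₁ f₂ ∘ₗ W.Δ)
    (hg : W.Δ ∘ₗ g = map g₁ g₂ ∘ₗ W.Δ) (X Y : H ⊗[k] H →ₗ[k] A) :
    hW.conv X Y ∘ₗ map f g = hW.conv (X ∘ₗ map f₁ g₁) (Y ∘ₗ map f₂ g₂) := by
  refine TensorProduct.ext' fun a b => ?_
  obtain ⟨n, x, y, ha⟩ := exists_fin_sum_tmul_eq (W.Δ a)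
  obtain ⟨N, u, v, hb⟩ := exists_fin_sum_tmul_eq (W.Δ b)
  have hfa : W.Δ (f a) = ∑ i, f₁ (x i) ⊗ₜ[k] f₂ (y i) := by
    simpa [ha] using LinearMap.congr_fun hf a
  have hgb : W.Δ (g b) = ∑ j, g₁ (u j) ⊗ₜ[k] g₂ (v j) := by
    simpa [hb] using LinearMap.congr_fun hg b
  simp [hW.conv_tmul _ _ hfa hgb, hW.conv_tmul _ _ ha hb]

theorem mulLeft_comp_conv (c : A) (f g : H ⊗[k] H →ₗ[k] A) :
    mulLeft k c ∘ₗ hW.conv f g = hW.conv (mulLeft k c ∘ₗ f) g := by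
  refine TensorProduct.ext' fun a b => ?_
  obtain ⟨n, x, y, ha⟩ := exists_fin_sum_tmul_eq (W.Δ a)
  obtain ⟨N, u, v, hb⟩ := exists_fin_sum_tmul_eq (W.Δ b)
  simp [hW.conv_tmul _ _ ha hb, mul_assoc]

theorem mulRight_comp_conv (c : A) (f g : H ⊗[k] H →ₗ[k] A) :
    mulRight k c ∘ₗ hW.conv f g = hW.conv f (mulRight k c ∘ₗ g) := by
  refine TensorProduct.ext' fun a b => ?_
  obtain ⟨n, x, y, ha⟩ := exists_fin_sum_tmul_eq (W.Δ a)
  obtain ⟨N, u, v, hb⟩ := exists_fin_sum_tmul_eq (W.Δ b)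
  simp [hW.conv_tmul _ _ ha hb, mul_assoc]

theorem conv_actCounit_tmul {ρ : H →ₗ[k] A →ₗ[k] A} (X : H ⊗[k] H →ₗ[k] A) (c : A)
    {a : H} {ι : Type*} [Fintype ι] {x y : ι → H} (ha : W.Δ a = ∑ i, x i ⊗ₜ[k] y i) (b : H) :
    hW.conv X (actCounit W ρ c) (a ⊗ₜ[k] b) = ∑ i, X (x i ⊗ₜ[k] b) * ρ (y i) c := by
  obtain ⟨N, u, v, hb⟩ := exists_fin_sum_tmul_eq (W.Δ b)
  conv_rhs => rw [← hW.sum_counit_smul_right hb]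
  simp [hW.conv_tmul _ _ ha hb, tmul_sum, Finset.sum_mul]

end Convolution

section Intertwining

theorem comul_comp_mulRight_of_mem_HL {l : H} (hl : l ∈ HL W) :
    W.Δ ∘ₗ mulRight k l = map (mulRight k l) LinearMap.id ∘ₗ W.Δ := by
  obtain ⟨m, rfl⟩ := hl
  refine LinearMap.ext fun a => ?_
  obtain ⟨n, x, y, ha⟩ := exists_fin_sum_tmul_eq (W.Δ a)
  have hΔ : W.Δ a * W.Δ 1 = W.Δ a := by rw [← hW.comul_mul, mul_one]
  rw [LinearMap.comp_apply, LinearMap.mulRight_apply, hW.comul_mul,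
    hW.comul_piL_eq_comul_one_mul, ← mul_assoc, hΔ, ha]
  simp [ha, Finset.sum_mul, tmul_mul_tmul]

theorem comul_comp_mulLeft_of_mem_HL {l : H} (hl : l ∈ HL W) :
    W.Δ ∘ₗ mulLeft k l = map (mulLeft k l) LinearMap.id ∘ₗ W.Δ := by
  obtain ⟨m, rfl⟩ := hl
  refine LinearMap.ext fun a => ?_
  obtain ⟨n, x, y, ha⟩ := exists_fin_sum_tmul_eq (W.Δ a)
  have hΔ : W.Δ 1 * W.Δ a = W.Δ a := by rw [← hW.comul_mul, one_mul]
  rw [LinearMap.comp_apply, LinearMap.mulLeft_apply, hW.comul_mul,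
    hW.comul_piL_eq_mul_comul_one, mul_assoc, hΔ, ha]
  simp [ha, Finset.mul_sum, tmul_mul_tmul]

theorem comul_comp_mulLeft_Sinv_of_mem_HL {l : H} (hl : l ∈ HL W) :
    W.Δ ∘ₗ mulLeft k (W.Sinv l) =
      map LinearMap.id (mulLeft k (W.Sinv l)) ∘ₗ W.Δ := by
  refine LinearMap.ext fun a => ?_
  obtain ⟨n, x, y, ha⟩ := exists_fin_sum_tmul_eq (W.Δ a)
  have hΔ : W.Δ 1 * W.Δ a = W.Δ a := by rw [← hW.comul_mul, one_mul]
  rw [LinearMap.comp_apply, LinearMap.mulLeft_apply, hW.comul_mul,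
    hW.comul_Sinv_eq_mul_comul_one hl, mul_assoc, hΔ, ha]
  simp [ha, Finset.mul_sum, tmul_mul_tmul]

end Intertwining

section Inverse

variable {ρ : H →ₗ[k] A →ₗ[k] A} {ς ςbar : H ⊗[k] H →ₗ[k] A}

theorem mulActOne_conv_of_cond23 (h23 : cond23 W ρ ⇑ςbar) :
    hW.conv (mulActOne ρ) ςbar = ςbar := by
  refine TensorProduct.ext' fun a b => ?_
  obtain ⟨n, x, y, ha⟩ := exists_fin_sum_tmul_eq (W.Δ a)
  obtain ⟨N, u, v, hb⟩ := exists_fin_sum_tmul_eq (W.Δ b)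
  rw [hW.conv_tmul _ _ ha hb, h23 a b n x y N u v ha hb]
  rfl

theorem conv_eq_mulActOne_of_cond24 (h24 : cond24 W ρ ⇑ς ⇑ςbar) :
    hW.conv ς ςbar = mulActOne ρ := by
  refine TensorProduct.ext' fun a b => ?_
  obtain ⟨n, x, y, ha⟩ := exists_fin_sum_tmul_eq (W.Δ a)
  obtain ⟨N, u, v, hb⟩ := exists_fin_sum_tmul_eq (W.Δ b)
  rw [hW.conv_tmul _ _ ha hb, (h24 a b n x y N u v ha hb).1, mulActOne_tmul]

theorem conv_eq_mulActOne_of_cond24' (h24 : cond24 W ρ ⇑ς ⇑ςbar) :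
    hW.conv ςbar ς = mulActOne ρ := by
  refine TensorProduct.ext' fun a b => ?_
  obtain ⟨n, x, y, ha⟩ := exists_fin_sum_tmul_eq (W.Δ a)
  obtain ⟨N, u, v, hb⟩ := exists_fin_sum_tmul_eq (W.Δ b)
  rw [hW.conv_tmul _ _ ha hb, (h24 a b n x y N u v ha hb).2, mulActOne_tmul]

theorem conv_mulActOne_of_cond23_of_cond24 (h23 : cond23 W ρ ⇑ςbar)
    (h24 : cond24 W ρ ⇑ς ⇑ςbar) :
    hW.conv ςbar (mulActOne ρ) = ςbar := by
  rw [← hW.conv_eq_mulActOne_of_cond24 h24, ← hW.conv_assoc,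
    hW.conv_eq_mulActOne_of_cond24' h24, hW.mulActOne_conv_of_cond23 h23]

theorem comp_mulRight_eq_comp_mulLeft (h23 : cond23 W ρ ⇑ςbar)
    (h24 : cond24 W ρ ⇑ς ⇑ςbar) {l : H} (hl : l ∈ HL W) :
    ςbar ∘ₗ map (mulRight k l) LinearMap.id =
      ςbar ∘ₗ map LinearMap.id (mulLeft k l) := by
  have hid : W.Δ ∘ₗ LinearMap.id = map LinearMap.id LinearMap.id ∘ₗ W.Δ := by simp
  have hR := hW.conv_comp_map (A := A) (hW.comul_comp_mulRight_of_mem_HL hl) hid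
  have hL := hW.conv_comp_map (A := A) hid (hW.comul_comp_mulLeft_of_mem_HL hl)
  simp only [map_id, LinearMap.comp_id] at hR hL
  refine hW.eq_of_conv_right_eq (hW.conv_eq_mulActOne_of_cond24 h24) ?_ ?_ ?_
  · rw [← hR, hW.conv_mulActOne_of_cond23_of_cond24 h23 h24]
  · rw [← hL, hW.conv_mulActOne_of_cond23_of_cond24 h23 h24]
  · rw [← hR, ← hL, hW.conv_eq_mulActOne_of_cond24' h24]
    exact TensorProduct.ext' fun a b => by simp [mul_assoc]

section Action

variable (h2 : cond2 W ρ) (h4 : cond4 ρ) (h11 : cond11 ρ) (h22 : cond22 W ρ)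
  (h23 : cond23 W ρ ⇑ςbar) (h24 : cond24 W ρ ⇑ς ⇑ςbar)
include h2 h4 h11 h22 h23 h24

theorem comp_mulLeft_eq_mulLeft_comp {l : H} (hl : l ∈ HL W) :
    ςbar ∘ₗ map (mulLeft k l) LinearMap.id =
      mulLeft k (ρ l 1) ∘ₗ ςbar := by
  have hid : W.Δ ∘ₗ LinearMap.id = map LinearMap.id LinearMap.id ∘ₗ W.Δ := by simp
  have hL := hW.conv_comp_map (A := A) (hW.comul_comp_mulLeft_of_mem_HL hl) hid
  simp only [map_id, LinearMap.comp_id] at hL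
  refine hW.eq_of_conv_right_eq (hW.conv_eq_mulActOne_of_cond24 h24) ?_ ?_ ?_
  · rw [← hL, hW.conv_mulActOne_of_cond23_of_cond24 h23 h24]
  · rw [← hW.mulLeft_comp_conv, hW.conv_mulActOne_of_cond23_of_cond24 h23 h24]
  · rw [← hL, ← hW.mulLeft_comp_conv, hW.conv_eq_mulActOne_of_cond24' h24]
    refine TensorProduct.ext' fun a b => ?_
    simp [mul_assoc, hW.act_mul_one_of_mem_HL h2 h4 h11 h22 hl]

theorem comp_mulLeft_Sinv_eq_mulRight_comp {l : H} (hl : l ∈ HL W) :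
    ςbar ∘ₗ map (mulLeft k (W.Sinv l)) LinearMap.id =
      mulRight k (ρ l 1) ∘ₗ ςbar := by
  have hid : W.Δ ∘ₗ LinearMap.id = map LinearMap.id LinearMap.id ∘ₗ W.Δ := by simp
  have hS := hW.conv_comp_map (A := A) (hW.comul_comp_mulLeft_Sinv_of_mem_HL hl) hid
  simp only [map_id, LinearMap.comp_id] at hS
  refine hW.eq_of_conv_left_eq (hW.conv_eq_mulActOne_of_cond24' h24) ?_ ?_ ?_
  · rw [← hS, hW.mulActOne_conv_of_cond23 h23]
  · rw [← hW.mulRight_comp_conv, hW.mulActOne_conv_of_cond23 h23]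
  · rw [← hS, ← hW.mulRight_comp_conv, hW.conv_eq_mulActOne_of_cond24 h24]
    refine TensorProduct.ext' fun a b => ?_
    simp [mul_assoc, hW.act_Sinv_mul_one_of_mem_HL h2 h4 h11 h22 hl]

theorem comp_mulLeft_Sinv_right_eq_conv_actCounit {l : H} (hl : l ∈ HL W) :
    ςbar ∘ₗ map LinearMap.id (mulLeft k (W.Sinv l)) =
      hW.conv ςbar (actCounit W ρ (ρ l 1)) := by
  have hid : W.Δ ∘ₗ LinearMap.id = map LinearMap.id LinearMap.id ∘ₗ W.Δ := by simp
  have hS := hW.conv_comp_map (A := A) hid (hW.comul_comp_mulLeft_Sinv_of_mem_HL hl)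
  simp only [map_id, LinearMap.comp_id] at hS
  refine hW.eq_of_conv_left_eq (hW.conv_eq_mulActOne_of_cond24' h24) ?_ ?_ ?_
  · rw [← hS, hW.mulActOne_conv_of_cond23 h23]
  · rw [← hW.conv_assoc, hW.mulActOne_conv_of_cond23 h23]
  · rw [← hS, ← hW.conv_assoc, hW.conv_eq_mulActOne_of_cond24 h24]
    refine TensorProduct.ext' fun a b => ?_
    obtain ⟨n, x, y, ha⟩ := exists_fin_sum_tmul_eq (W.Δ a)
    rw [hW.conv_actCounit_tmul _ _ ha]
    simp only [LinearMap.comp_apply, map_tmul, LinearMap.id_apply,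
      LinearMap.mulLeft_apply, mulActOne_tmul, ← h11 _ b]
    rw [← h2.act_mul _ _ ha, ← hW.act_Sinv_mul_one_of_mem_HL h2 h4 h11 h22 hl, h11]

end Action

end Inverse

end IsWeakHopf

theorem statement13_general {k H A : Type*} [Field k] [Ring H] [Algebra k H] [Ring A] [Algebra k A]
    (W : WeakHopfData k H) (hW : IsWeakHopf W) (ρ : H →ₗ[k] A →ₗ[k] A)
    (ς : H ⊗[k] H →ₗ[k] A) (ςbar : H ⊗[k] H →ₗ[k] A)
    (h2 : cond2 W ρ) (h4 : cond4 ρ) (h11 : cond11 ρ)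
    (h22 : cond22 W ρ)
    (h23 : cond23 W ρ ⇑ςbar) (h24 : cond24 W ρ ⇑ς ⇑ςbar) :
    (∀ (h g : H), ∀ l ∈ HL W, ςbar ((h * l) ⊗ₜ[k] g) = ςbar (h ⊗ₜ[k] (l * g))) ∧
      cond13 W ρ (fun h g => ςbar (h ⊗ₜ[k] g)) ∧
      cond14 W ρ (fun h g => ςbar (h ⊗ₜ[k] g)) ∧
      cond15 W ρ (fun h g => ςbar (h ⊗ₜ[k] g)) ∧
      cond16 W ρ (fun h g => ς (h ⊗ₜ[k] g)) (fun h g => ςbar (h ⊗ₜ[k] g)) := by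
  refine ⟨fun h g l hl => ?_, h23, fun h g l hl => ⟨?_, ?_⟩, fun h g l hl n x y hxy => ?_,
    fun h g n x y m u v hx hg => ?_⟩
  · simpa using LinearMap.congr_fun (hW.comp_mulRight_eq_comp_mulLeft h23 h24 hl) (h ⊗ₜ g)
  · simpa using LinearMap.congr_fun
      (hW.comp_mulLeft_eq_mulLeft_comp h2 h4 h11 h22 h23 h24 hl) (h ⊗ₜ g)
  · simpa using LinearMap.congr_fun
      (hW.comp_mulLeft_Sinv_eq_mulRight_comp h2 h4 h11 h22 h23 h24 hl) (h ⊗ₜ g)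
  · have := LinearMap.congr_fun
      (hW.comp_mulLeft_Sinv_right_eq_conv_actCounit h2 h4 h11 h22 h23 h24 hl) (h ⊗ₜ g)
    rw [hW.conv_actCounit_tmul _ _ hxy] at this
    simpa using this.symm
  · obtain ⟨h24₁, h24₂⟩ := h24 h g n x y m u v hx hg
    exact ⟨h24₁.trans (h11 h g).symm, h24₂⟩

/-- if `ρ, ς` satisfy (2), (4), (11), (17)–(22) and `ς` is
invertible with inverse `ς̄` (conditions (23), (24)), then `ς̄` is
`H^L`-balanced and, with `σ(h,k) := ς(h⊗k)` and `σ̄(h,k) := ς̄(h⊗k)`, the map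
`σ̄` satisfies conditions (13)–(16). -/
theorem statement13 {k H A : Type*} [Field k] [Ring H] [Algebra k H] [Ring A] [Algebra k A]
    (W : WeakHopfData k H) (hW : IsWeakHopf W) (ρ : H →ₗ[k] A →ₗ[k] A)
    (ς : H ⊗[k] H →ₗ[k] A) (ςbar : H ⊗[k] H →ₗ[k] A)
    (h2 : cond2 W ρ) (h4 : cond4 ρ) (h11 : cond11 ρ)
    (h17 : cond17 W ρ ⇑ς) (h18 : cond18 W ρ ⇑ς) (h19 : cond19 W ρ ⇑ς)
    (h20 : cond20 W ρ ⇑ς) (h21 : cond21 W ρ ⇑ς) (h22 : cond22 W ρ)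
    (h23 : cond23 W ρ ⇑ςbar) (h24 : cond24 W ρ ⇑ς ⇑ςbar) :
    (∀ (h g : H), ∀ l ∈ HL W, ςbar ((h * l) ⊗ₜ[k] g) = ςbar (h ⊗ₜ[k] (l * g))) ∧
      cond13 W ρ (fun h g => ςbar (h ⊗ₜ[k] g)) ∧
      cond14 W ρ (fun h g => ςbar (h ⊗ₜ[k] g)) ∧
      cond15 W ρ (fun h g => ςbar (h ⊗ₜ[k] g)) ∧
      cond16 W ρ (fun h g => ς (h ⊗ₜ[k] g)) (fun h g => ςbar (h ⊗ₜ[k] g)) :=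
  statement13_general W hW ρ ς ςbar h2 h4 h11 h22 h23 h24
end

section
/- Assume ρ and a k-bilinear H^R-balanced map σ:H×H→A satisfy conditions (1)–(10). Let ∇ρ:A⊗H→A⊗H be the k-linear map ∇ρ(a⊗h):=a(h⁽¹⁾·1_A)⊗h⁽²⁾. Then for all a∈A, l∈H^L and h∈H: ∇ρ(a(l·1_A)⊗h) = ∇ρ(a⊗lh). -/
open scoped TensorProduct

/-! For `l = Π^L(g)` the weak comultiplication axiom `(id ⊗ Δ)Δ(1) = (Δ(1) ⊗ 1)(1 ⊗ Δ(1))`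
gives `Δ(l) = (l ⊗ 1)Δ(1)`, hence `Δ(lh) = (l ⊗ 1)Δ(h)`. So `∇ρ(a ⊗ lh) = a(lh⁽¹⁾·1_A) ⊗ h⁽²⁾`,
and condition (3) rewrites `lh⁽¹⁾·1_A` as `(l·1_A)(h⁽¹⁾·1_A)`. -/

section

variable {k H A : Type*} [Field k] [Ring H] [Algebra k H] [Ring A] [Algebra k A]

lemma lid_rTensor_lTensor {M N : Type*} [AddCommGroup M] [Module k M] [AddCommGroup N]
    [Module k N] (ψ : H →ₗ[k] k) (f : M →ₗ[k] N) (x : H ⊗[k] M) :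
    TensorProduct.lid k N (LinearMap.rTensor N ψ (LinearMap.lTensor H f x)) =
      f (TensorProduct.lid k M (LinearMap.rTensor M ψ x)) := by
  induction x using TensorProduct.induction_on with
  | zero => simp
  | tmul x y => simp
  | add u v hu hv => simp only [map_add, hu, hv]

lemma assoc_tmul_one_mul_one_tmul (x y : H ⊗[k] H) :
    TensorProduct.assoc k H H H (x ⊗ₜ[k] (1 : H)) * ((1 : H) ⊗ₜ[k] y) =
      LinearMap.lTensor H (LinearMap.mulRight k y ∘ₗ (TensorProduct.mk k H H).flip 1) x := by
  induction x using TensorProduct.induction_on with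
  | zero => simp
  | tmul x₁ x₂ => simp
  | add u v hu hv => simp only [TensorProduct.add_tmul, map_add, add_mul, hu, hv]

lemma comul_piL (W : WeakHopfData k H) (hW : IsWeakHopf W) (g : H) :
    W.Δ (piL W g) = (piL W g ⊗ₜ[k] (1 : H)) * W.Δ 1 := by
  set ψ := W.ε ∘ₗ LinearMap.mulRight k g
  calc W.Δ (piL W g)
      = TensorProduct.lid k (H ⊗[k] H)
          (LinearMap.rTensor _ ψ (LinearMap.lTensor H W.Δ (W.Δ 1))) :=
        (lid_rTensor_lTensor ψ W.Δ (W.Δ 1)).symm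
    _ = TensorProduct.lid k (H ⊗[k] H) (LinearMap.rTensor _ ψ (LinearMap.lTensor H
          (LinearMap.mulRight k (W.Δ 1) ∘ₗ (TensorProduct.mk k H H).flip 1) (W.Δ 1))) := by
        rw [hW.weak_comul_one₁, assoc_tmul_one_mul_one_tmul]
    _ = (piL W g ⊗ₜ[k] (1 : H)) * W.Δ 1 := lid_rTensor_lTensor ψ _ (W.Δ 1)

lemma comul_mul_of_mem_HL (W : WeakHopfData k H) (hW : IsWeakHopf W) {l : H}
    (hl : l ∈ HL W) (h : H) : W.Δ (l * h) = (l ⊗ₜ[k] (1 : H)) * W.Δ h := by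
  obtain ⟨g, rfl⟩ := hl
  rw [hW.comul_mul, comul_piL W hW g, mul_assoc, ← hW.comul_mul, one_mul]

lemma nabla_tmul (W : WeakHopfData k H) (ρ : H →ₗ[k] A →ₗ[k] A) (a : A) (h : H) :
    nabla W ρ (a ⊗ₜ[k] h) =
      TensorProduct.map (LinearMap.mulLeft k a ∘ₗ ρ.flip 1) LinearMap.id (W.Δ h) := by
  simp only [nabla, LinearMap.comp_apply, LinearMap.lTensor_tmul, LinearEquiv.coe_coe]
  induction W.Δ h using TensorProduct.induction_on with
  | zero => simp
  | tmul x y => simp [LinearMap.mul'_apply]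
  | add u v hu hv => simp only [TensorProduct.tmul_add, map_add, hu, hv]

end

theorem statement16_general {k H A : Type*} [Field k] [Ring H] [Algebra k H] [Ring A] [Algebra k A]
    (W : WeakHopfData k H) (hW : IsWeakHopf W) (ρ : H →ₗ[k] A →ₗ[k] A)
    (h3 : cond3 W ρ) :
    ∀ (a : A) (h : H), ∀ l ∈ HL W,
      nabla W ρ ((a * ρ l 1) ⊗ₜ[k] h) = nabla W ρ (a ⊗ₜ[k] (l * h)) := by
  intro a h l hl
  rw [nabla_tmul, nabla_tmul, comul_mul_of_mem_HL W hW hl]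
  induction W.Δ h using TensorProduct.induction_on with
  | zero => simp
  | tmul x y => simp [(h3 x 1 l hl).2]
  | add u v hu hv => simp only [mul_add, map_add, hu, hv]

/-- under conditions (1)–(10), `∇ρ(a(l·1_A) ⊗ h) = ∇ρ(a ⊗ lh)`
for all `a ∈ A`, `l ∈ H^L` and `h ∈ H`. -/
theorem statement16 {k H A : Type*} [Field k] [Ring H] [Algebra k H] [Ring A] [Algebra k A]
    (W : WeakHopfData k H) (hW : IsWeakHopf W) (ρ : H →ₗ[k] A →ₗ[k] A)
    (σb : H →ₗ[k] H →ₗ[k] A) (hbal : HRBalanced W (fun h g => σb h g))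
    (h1 : cond1 W ρ) (h2 : cond2 W ρ) (h3 : cond3 W ρ) (h4 : cond4 ρ)
    (h5 : cond5 W ρ (fun h g => σb h g)) (h6 : cond6 W ρ (fun h g => σb h g))
    (h7 : cond7 ρ (fun h g => σb h g)) (h8 : cond8 W ρ (fun h g => σb h g))
    (h9 : cond9 W ρ (fun h g => σb h g)) (h10 : cond10 W ρ) :
    ∀ (a : A) (h : H), ∀ l ∈ HL W,
      nabla W ρ ((a * ρ l 1) ⊗ₜ[k] h) = nabla W ρ (a ⊗ₜ[k] (l * h)) :=
  statement16_general W hW ρ h3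
end
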